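/- Let σ > 0 and θ0 ∈ ℝ. In the balanced parametric empirical Bayes setting, the strength of evidence function V(x), equal to 1 for |x−θ0| ≤ σ and Λ((1/σ)√((x−θ0)²−σ²)·sign(x−θ0)) for |x−θ0| ≥ σ, is nondecreasing on ℝ, strictly increasing on [θ0+σ, ∞) and on (−∞, θ0−σ], satisfies V(x)·V(2θ0−x) = 1 for all x, V(x) > 1 for x > θ0+σ, and V(x) < 1 for x < θ0−σ. -/

import Mathlib

/-!
Write `V = Λ ∘ s` with the score `s(x) = σ⁻¹ √((x−θ0)²−σ²) · sign(x−θ0)`, which vanishes on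
`|x−θ0| ≤ σ`, so the two branches of `V` agree there because `Λ(0) = 1`. Since `Φ` is positive
and strictly increasing, `Λ` is strictly increasing with `Λ(y) Λ(−y) = 1`. The score is odd about
`θ0`, positive and strictly increasing beyond `θ0 + σ`, and therefore monotone; every property of
`V` follows by composing with `Λ`.
-/

/-- The standard normal density. -/
noncomputable def stdNormalPDF (t : ℝ) : ℝ := Real.exp (-t ^ 2 / 2) / Real.sqrt (2 * Real.pi)

/-- The standard normal cumulative distribution function. -/
noncomputable def stdNormalCDF (y : ℝ) : ℝ := ∫ t in Set.Iic y, stdNormalPDF t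

/-- The odds transform `Λ(y) = Φ(y)/Φ(−y)`. -/
noncomputable def Lambda (y : ℝ) : ℝ := stdNormalCDF y / stdNormalCDF (-y)

open MeasureTheory Set

lemma stdNormalPDF_pos (t : ℝ) : 0 < stdNormalPDF t := by
  unfold stdNormalPDF
  positivity

lemma integrable_stdNormalPDF : Integrable stdNormalPDF := by
  have hform : stdNormalPDF = fun t => Real.exp (-(1 / 2) * t ^ 2) / Real.sqrt (2 * Real.pi) := by
    funext t
    unfold stdNormalPDF
    ring_nf
  rw [hform]
  exact (integrable_exp_neg_mul_sq (by norm_num)).div_const _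

lemma stdNormalCDF_strictMono : StrictMono stdNormalCDF := by
  intro a b hab
  have hdiff : stdNormalCDF b - stdNormalCDF a = ∫ t in a..b, stdNormalPDF t :=
    intervalIntegral.integral_Iic_sub_Iic integrable_stdNormalPDF.integrableOn
      integrable_stdNormalPDF.integrableOn
  have hpos : 0 < ∫ t in a..b, stdNormalPDF t :=
    intervalIntegral.intervalIntegral_pos_of_pos integrable_stdNormalPDF.intervalIntegrable
      stdNormalPDF_pos hab
  linarith

lemma stdNormalCDF_pos (y : ℝ) : 0 < stdNormalCDF y :=
  calc 0 ≤ stdNormalCDF (y - 1) :=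
        setIntegral_nonneg measurableSet_Iic fun t _ => (stdNormalPDF_pos t).le
    _ < stdNormalCDF y := stdNormalCDF_strictMono (by linarith)

lemma Lambda_strictMono : StrictMono Lambda := by
  intro a b hab
  have hnum : stdNormalCDF a < stdNormalCDF b := stdNormalCDF_strictMono hab
  have hden : stdNormalCDF (-b) < stdNormalCDF (-a) := stdNormalCDF_strictMono (neg_lt_neg hab)
  exact div_lt_div₀ hnum hden.le (stdNormalCDF_pos b).le (stdNormalCDF_pos (-b))

lemma Lambda_zero : Lambda 0 = 1 := by
  rw [Lambda, neg_zero, div_self (stdNormalCDF_pos 0).ne']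

lemma Lambda_mul_Lambda_neg (y : ℝ) : Lambda y * Lambda (-y) = 1 := by
  rw [Lambda, Lambda, neg_neg, div_mul_div_comm, mul_comm (stdNormalCDF (-y))]
  exact div_self (mul_pos (stdNormalCDF_pos y) (stdNormalCDF_pos (-y))).ne'

noncomputable def evidenceScore (σ θ0 x : ℝ) : ℝ :=
  (1 / σ) * Real.sqrt ((x - θ0) ^ 2 - σ ^ 2) * Real.sign (x - θ0)

namespace evidenceScore

variable {σ θ0 x : ℝ}

lemma eq_zero_of_abs_le (h : |x - θ0| ≤ σ) : evidenceScore σ θ0 x = 0 := by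
  have hrad : (x - θ0) ^ 2 - σ ^ 2 ≤ 0 := by
    rw [← sq_abs]
    nlinarith [abs_nonneg (x - θ0)]
  rw [evidenceScore, Real.sqrt_eq_zero'.mpr hrad, mul_zero, zero_mul]

lemma reflect (σ θ0 x : ℝ) : evidenceScore σ θ0 (2 * θ0 - x) = -evidenceScore σ θ0 x := by
  have hrefl : 2 * θ0 - x - θ0 = -(x - θ0) := by ring
  rw [evidenceScore, evidenceScore, hrefl, neg_sq, Real.sign_neg]
  ring

lemma of_sub_pos (h : 0 < x - θ0) :
    evidenceScore σ θ0 x = (1 / σ) * Real.sqrt ((x - θ0) ^ 2 - σ ^ 2) := by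
  rw [evidenceScore, Real.sign_of_pos h, mul_one]

variable (hσ : 0 < σ)
include hσ

lemma pos (h : θ0 + σ < x) : 0 < evidenceScore σ θ0 x := by
  rw [of_sub_pos (by linarith)]
  have hrad : 0 < (x - θ0) ^ 2 - σ ^ 2 := by nlinarith
  positivity

lemma neg (h : x < θ0 - σ) : evidenceScore σ θ0 x < 0 := by
  have hpos := pos hσ (show θ0 + σ < 2 * θ0 - x by linarith)
  rw [reflect] at hpos
  linarith

lemma nonneg (h : -σ ≤ x - θ0) : 0 ≤ evidenceScore σ θ0 x := by
  rcases le_or_gt (x - θ0) σ with hle | hgt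
  · exact (eq_zero_of_abs_le (abs_le.mpr ⟨h, hle⟩)).ge
  · exact (pos hσ (by linarith)).le

lemma nonpos (h : x - θ0 ≤ σ) : evidenceScore σ θ0 x ≤ 0 := by
  have hnonneg := nonneg hσ (show -σ ≤ 2 * θ0 - x - θ0 by linarith)
  rw [reflect] at hnonneg
  linarith

lemma strictMonoOn_Ici : StrictMonoOn (evidenceScore σ θ0) (Ici (θ0 + σ)) := by
  intro a ha b hb hab
  rw [mem_Ici] at ha hb
  rw [of_sub_pos (by linarith), of_sub_pos (by linarith)]
  have hsqrt : Real.sqrt ((a - θ0) ^ 2 - σ ^ 2) < Real.sqrt ((b - θ0) ^ 2 - σ ^ 2) :=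
    Real.sqrt_lt_sqrt (by nlinarith) (by nlinarith)
  exact mul_lt_mul_of_pos_left hsqrt (by positivity)

lemma strictMonoOn_Iic : StrictMonoOn (evidenceScore σ θ0) (Iic (θ0 - σ)) := by
  intro a ha b hb hab
  rw [mem_Iic] at ha hb
  have hrefl : evidenceScore σ θ0 (2 * θ0 - b) < evidenceScore σ θ0 (2 * θ0 - a) :=
    strictMonoOn_Ici hσ (by rw [mem_Ici]; linarith) (by rw [mem_Ici]; linarith) (by linarith)
  rw [reflect, reflect] at hrefl
  linarith

lemma monotone : Monotone (evidenceScore σ θ0) := by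
  intro a b hab
  by_cases ha : θ0 + σ ≤ a
  · exact (strictMonoOn_Ici hσ).monotoneOn ha (show θ0 + σ ≤ b by linarith) hab
  by_cases hb : b ≤ θ0 - σ
  · exact (strictMonoOn_Iic hσ).monotoneOn (show a ≤ θ0 - σ by linarith) hb hab
  exact (nonpos hσ (by linarith)).trans (nonneg hσ (by linarith))

end evidenceScore

/-- Properties of the balanced parametric empirical Bayes strength of evidence:
`V` is nondecreasing, strictly increasing on `[θ0+σ, ∞)` and on `(−∞, θ0−σ]`,
satisfies `V(x)·V(2θ0−x) = 1`, and `V(x) > 1` for `x > θ0+σ`, `V(x) < 1` for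
`x < θ0−σ`. -/
theorem balanced_strength_of_evidence_properties
    (σ θ0 : ℝ) (hσ : 0 < σ) :
    let V : ℝ → ℝ := fun x => if |x - θ0| ≤ σ then 1
      else Lambda ((1 / σ) * Real.sqrt ((x - θ0) ^ 2 - σ ^ 2) * Real.sign (x - θ0))
    Monotone V ∧
    StrictMonoOn V (Set.Ici (θ0 + σ)) ∧
    StrictMonoOn V (Set.Iic (θ0 - σ)) ∧
    (∀ x : ℝ, V x * V (2 * θ0 - x) = 1) ∧
    (∀ x : ℝ, θ0 + σ < x → 1 < V x) ∧
    (∀ x : ℝ, x < θ0 - σ → V x < 1) := by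
  intro V
  have hV : V = Lambda ∘ evidenceScore σ θ0 := by
    funext x
    by_cases h : |x - θ0| ≤ σ
    · simp only [V, if_pos h, Function.comp_apply, evidenceScore.eq_zero_of_abs_le h, Lambda_zero]
    · simp only [V, if_neg h, Function.comp_apply, evidenceScore]
  rw [hV]
  refine ⟨Lambda_strictMono.monotone.comp (evidenceScore.monotone hσ),
    Lambda_strictMono.comp_strictMonoOn (evidenceScore.strictMonoOn_Ici hσ),
    Lambda_strictMono.comp_strictMonoOn (evidenceScore.strictMonoOn_Iic hσ), fun x => ?_,
    fun x hx => ?_, fun x hx => ?_⟩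
  · simp only [Function.comp_apply, evidenceScore.reflect, Lambda_mul_Lambda_neg]
  · exact Lambda_zero ▸ Lambda_strictMono (evidenceScore.pos hσ hx)
  · exact Lambda_zero ▸ Lambda_strictMono (evidenceScore.neg hσ hx)
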